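/- arXiv:1510.06913 — 3 statements merged into one kernel-verified Lean document; each statement's English description precedes it below -/
import Mathlib

section
/- The Adler–Yamilov map Y_{a,b}(x₁,x₂,y₁,y₂) = (y₁ + (b−a)x₁/(1 + x₁y₂), y₂, x₁, x₂ + (a−b)y₂/(1 + x₁y₂)) satisfies the parametric Yang–Baxter equation Y¹²_{a,b} ∘ Y¹³_{a,c} ∘ Y²³_{b,c} = Y²³_{b,c} ∘ Y¹³_{a,c} ∘ Y¹²_{a,b}, on the domain where all occurring denominators 1 + x₁y₂ are nonzero. -/
/-- The Adler–Yamilov map. -/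
noncomputable def AY {K : Type*} [Field K] (a b : K) :
    (K × K) × (K × K) → (K × K) × (K × K) := fun p =>
  ((p.2.1 + (b - a) * p.1.1 / (1 + p.1.1 * p.2.2), p.2.2),
   (p.1.1, p.1.2 + (a - b) * p.2.2 / (1 + p.1.1 * p.2.2)))

/-- The denominator occurring in the Adler–Yamilov map applied to (x, y). -/
def AYden {K : Type*} [Field K] (x y : K × K) : K := 1 + x.1 * y.2

def lift12 {A : Type*} (f : A × A → A × A) : A × A × A → A × A × A :=
  fun p => ((f (p.1, p.2.1)).1, (f (p.1, p.2.1)).2, p.2.2)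

def lift13 {A : Type*} (f : A × A → A × A) : A × A × A → A × A × A :=
  fun p => ((f (p.1, p.2.2)).1, p.2.1, (f (p.1, p.2.2)).2)

def lift23 {A : Type*} (f : A × A → A × A) : A × A × A → A × A × A :=
  fun p => (p.1, (f (p.2.1, p.2.2)).1, (f (p.2.1, p.2.2)).2)

/-! Both sides can be computed in closed form. Put `d₁ = 1 + y₁z₂`, `d₂ = 1 + x₁y₂` and
`P s = d₁d₂ + s x₁z₂` (`AY.ybDen`). The denominators met along the left-hand side are `d₁`, `P (b - c) / d₁`
and `d₁ P (b - a) / P (b - c)`; along the right-hand side they are `d₂`, `P (b - a) / d₂` and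
`d₂ P (b - c) / P (b - a)`. Both compositions evaluate to the same triple `AY.ybValue`, the
remaining coincidences reducing to `(b - a) P (b - c) + (c - b) P (b - a) = (c - a) d₁ d₂`. -/

section Lift

variable {A : Type*} (f : A × A → A × A) (p q r : A)

theorem lift12_apply : lift12 f (p, q, r) = ((f (p, q)).1, (f (p, q)).2, r) := rfl

theorem lift13_apply : lift13 f (p, q, r) = ((f (p, r)).1, q, (f (p, r)).2) := rfl

theorem lift23_apply : lift23 f (p, q, r) = (p, (f (q, r)).1, (f (q, r)).2) := rfl

end Lift

namespace AY

variable {K : Type*} [Field K]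

theorem apply_mk (a b : K) (x y : K × K) :
    AY a b (x, y) =
      ((y.1 + (b - a) * x.1 / AYden x y, y.2), (x.1, x.2 + (a - b) * y.2 / AYden x y)) :=
  rfl

theorem apply_mk_of_AYden_eq (a b : K) {x y : K × K} {p q : K} (h : AYden x y = p / q) :
    AY a b (x, y) =
      ((y.1 + (b - a) * x.1 * q / p, y.2), (x.1, x.2 + (a - b) * y.2 * q / p)) := by
  rw [apply_mk, h, div_div_eq_mul_div, div_div_eq_mul_div]

def ybDen (s : K) (x y z : K × K) : K := AYden x y * AYden y z + s * x.1 * z.2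

def ybValue (a b c : K) (x y z : K × K) : (K × K) × (K × K) × (K × K) :=
  ((z.1 + (c - a) * (y.1 * AYden x y + (b - a) * x.1) / ybDen (b - a) x y z, z.2),
   (y.1 + (c - a) * x.1 * AYden y z / ybDen (b - c) x y z,
     y.2 + (a - c) * z.2 * AYden x y / ybDen (b - a) x y z),
   (x.1, x.2 + (a - c) * (y.2 * AYden y z + (b - c) * z.2) / ybDen (b - c) x y z))

theorem AYden_lift23 (b c : K) {x y z : K × K} (hyz : AYden y z ≠ 0) :
    AYden x (lift23 (AY b c) (x, y, z)).2.2 = ybDen (b - c) x y z / AYden y z := by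
  change 1 + x.1 * (y.2 + (b - c) * z.2 / AYden y z) = _
  rw [eq_div_iff hyz, ybDen]
  field_simp
  unfold AYden
  ring

theorem AYden_lift12 (a b : K) {x y z : K × K} (hxy : AYden x y ≠ 0) :
    AYden (lift12 (AY a b) (x, y, z)).1 (lift12 (AY a b) (x, y, z)).2.2 =
      ybDen (b - a) x y z / AYden x y := by
  change 1 + (y.1 + (b - a) * x.1 / AYden x y) * z.2 = _
  rw [eq_div_iff hxy, ybDen]
  field_simp
  unfold AYden
  ring

theorem lift12_comp_lift13_comp_lift23_apply (a b c : K) {x y z : K × K}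
    (hyz : AYden y z ≠ 0) (hP : ybDen (b - c) x y z ≠ 0) (hQ : ybDen (b - a) x y z ≠ 0) :
    (lift12 (AY a b) ∘ lift13 (AY a c) ∘ lift23 (AY b c)) (x, y, z) = ybValue a b c x y z := by
  have den₂ : AYden x (y.1, y.2 + (b - c) * z.2 / AYden y z) =
      ybDen (b - c) x y z / AYden y z :=
    AYden_lift23 b c hyz
  have den₃ : AYden
      (y.1 + (c - a) * x.1 * AYden y z / ybDen (b - c) x y z, y.2 + (b - c) * z.2 / AYden y z)
      (z.1 + (c - b) * y.1 / AYden y z, z.2) =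
      AYden y z * ybDen (b - a) x y z / ybDen (b - c) x y z := by
    rw [eq_div_iff hP]
    change (1 + _ * z.2) * _ = _
    field_simp
    unfold ybDen AYden
    ring
  rw [Function.comp_apply, Function.comp_apply, lift23_apply, apply_mk, lift13_apply]
  dsimp only
  rw [apply_mk_of_AYden_eq a c den₂, lift12_apply]
  dsimp only
  rw [apply_mk_of_AYden_eq a b den₃]
  simp only [ybValue, Prod.mk.injEq, and_true, true_and]
  refine ⟨?_, ?_, ?_⟩ <;> field_simp <;> unfold ybDen AYden <;> ring

theorem lift23_comp_lift13_comp_lift12_apply (a b c : K) {x y z : K × K}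
    (hxy : AYden x y ≠ 0) (hP : ybDen (b - c) x y z ≠ 0) (hQ : ybDen (b - a) x y z ≠ 0) :
    (lift23 (AY b c) ∘ lift13 (AY a c) ∘ lift12 (AY a b)) (x, y, z) = ybValue a b c x y z := by
  have den₂ : AYden (y.1 + (b - a) * x.1 / AYden x y, y.2) z =
      ybDen (b - a) x y z / AYden x y :=
    AYden_lift12 a b hxy
  have den₃ : AYden (x.1, x.2 + (a - b) * y.2 / AYden x y)
      (y.1 + (b - a) * x.1 / AYden x y, y.2 + (a - c) * z.2 * AYden x y / ybDen (b - a) x y z) =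
      AYden x y * ybDen (b - c) x y z / ybDen (b - a) x y z := by
    rw [eq_div_iff hQ]
    change (1 + x.1 * _) * _ = _
    field_simp
    unfold ybDen AYden
    ring
  rw [Function.comp_apply, Function.comp_apply, lift12_apply, apply_mk, lift13_apply]
  dsimp only
  rw [apply_mk_of_AYden_eq a c den₂, lift23_apply]
  dsimp only
  rw [apply_mk_of_AYden_eq b c den₃]
  simp only [ybValue, Prod.mk.injEq, and_true, true_and]
  refine ⟨?_, ?_, ?_⟩ <;> field_simp <;> unfold ybDen AYden <;> ring

end AY

theorem AY_yang_baxter_general {K : Type*} [Field K] (a b c : K)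
    (x y z : K × K)
    -- denominators on the left-hand side composition
    (h1 : AYden y z ≠ 0)
    (h2 : AYden x ((lift23 (AY b c)) (x, y, z)).2.2 ≠ 0)
    -- denominators on the right-hand side composition
    (h4 : AYden x y ≠ 0)
    (h5 : AYden ((lift12 (AY a b)) (x, y, z)).1
            ((lift12 (AY a b)) (x, y, z)).2.2 ≠ 0) :
    (lift12 (AY a b) ∘ lift13 (AY a c) ∘ lift23 (AY b c)) (x, y, z) =
      (lift23 (AY b c) ∘ lift13 (AY a c) ∘ lift12 (AY a b)) (x, y, z) := by
  rw [AY.AYden_lift23 b c h1, div_ne_zero_iff] at h2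
  rw [AY.AYden_lift12 a b h4, div_ne_zero_iff] at h5
  rw [AY.lift12_comp_lift13_comp_lift23_apply a b c h1 h2.1 h5.1,
    AY.lift23_comp_lift13_comp_lift12_apply a b c h4 h2.1 h5.1]

/-- The Adler–Yamilov map satisfies the parametric Yang–Baxter equation on the
domain where all occurring denominators `1 + x₁y₂` are nonzero. -/
theorem AY_yang_baxter {K : Type*} [Field K] [CharZero K] (a b c : K)
    (x y z : K × K)
    -- denominators on the left-hand side composition
    (h1 : AYden y z ≠ 0)
    (h2 : AYden x ((lift23 (AY b c)) (x, y, z)).2.2 ≠ 0)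
    (h3 : AYden ((lift13 (AY a c)) ((lift23 (AY b c)) (x, y, z))).1
            ((lift13 (AY a c)) ((lift23 (AY b c)) (x, y, z))).2.1 ≠ 0)
    -- denominators on the right-hand side composition
    (h4 : AYden x y ≠ 0)
    (h5 : AYden ((lift12 (AY a b)) (x, y, z)).1
            ((lift12 (AY a b)) (x, y, z)).2.2 ≠ 0)
    (h6 : AYden ((lift13 (AY a c)) ((lift12 (AY a b)) (x, y, z))).2.1
            ((lift13 (AY a c)) ((lift12 (AY a b)) (x, y, z))).2.2 ≠ 0) :
    (lift12 (AY a b) ∘ lift13 (AY a c) ∘ lift23 (AY b c)) (x, y, z) =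
      (lift23 (AY b c) ∘ lift13 (AY a c) ∘ lift12 (AY a b)) (x, y, z) :=
  AY_yang_baxter_general a b c x y z h1 h2 h4 h5
end

section
/- Given the refactorisation equations U + V = X + Y, UV + u₁v₂ = YX + y₁x₂, Ux₁ + u₁ = Yx₁ + y₁, y₂V + v₂ = y₂X + x₂ (in the commutative bosonic case), either U = Y (giving the permutation map u₁ = y₁, v₂ = x₂, U = Y, V = X), or, if 1 + x₁y₂ ≠ 0, U = (X − x₁x₂ + x₁y₂Y + y₁y₂)/(1 + x₁y₂). -/
/-- Solving the refactorisation equations in the commutative (bosonic) case: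
either `U = Y` (giving the permutation map), or, if `1 + x₁y₂ ≠ 0`, `U` is given
by the stated rational formula. -/
theorem NLS_refactorisation_solutions {K : Type*} [Field K] [CharZero K]
    (x1 x2 y1 y2 X Y u1 v2 U V : K)
    (e1 : U + V = X + Y)
    (e2 : U * V + u1 * v2 = Y * X + y1 * x2)
    (e3 : U * x1 + u1 = Y * x1 + y1)
    (e4 : y2 * V + v2 = y2 * X + x2) :
    (U = Y ∧ u1 = y1 ∧ v2 = x2 ∧ V = X) ∨
      (1 + x1 * y2 ≠ 0 →
        U = (X - x1 * x2 + x1 * y2 * Y + y1 * y2) / (1 + x1 * y2)) := by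
  rcases eq_or_ne U Y with hU | hU
  · left
    subst hU
    have hV : V = X := by linear_combination e1
    refine ⟨rfl, by linear_combination e3, by linear_combination e4 - y2 * hV, hV⟩
  · right
    intro h
    have key : (U - Y) * (U * (1 + x1 * y2) - (X - x1 * x2 + x1 * y2 * Y + y1 * y2)) = 0 := by
      linear_combination (U - y2 * (y1 - (U - Y) * x1)) * e1 - e2 + v2 * e3 +
        (y1 - (U - Y) * x1) * e4
    rcases mul_eq_zero.mp key with h1 | h2
    · exact absurd (sub_eq_zero.mp h1) hU
    · rw [eq_div_iff h]
      linear_combination h2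
end

section
/- The vector NLS Yang–Baxter map on pairs of N-vectors defined by ⟨u₁| = ⟨y₁| + (b−a)/(1+⟨x₁,y₂⟩) ⟨x₁|, ⟨u₂| = ⟨y₂|, ⟨v₁| = ⟨x₁|, ⟨v₂| = ⟨x₂| + (a−b)/(1+⟨x₁,y₂⟩) ⟨y₂| admits the Lax representation M(u₁,u₂;a,λ)M(v₁,v₂;b,λ) = M(y₁,y₂;b,λ)M(x₁,x₂;a,λ) for all λ, where M(w₁,w₂;a,λ) is the (N+1)×(N+1) matrix with (1,1) entry λ + a + ⟨w₁,w₂⟩, first row (after the corner) ⟨w₁|, first column (after the corner) |w₂⟩, and identity in the remaining N×N block; assume 1 + ⟨x₁,y₂⟩ ≠ 0. -/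
/-!
Both products are block matrices whose lower-right blocks coincide (`y₂ x₁ᵀ + 1`). Writing
`u₁ = y₁ + c x₁` and `v₂ = x₂ - c y₂`, the other three blocks agree as soon as
`a + c (1 + ⟨x₁, y₂⟩) = b`, an identity linear in `c`; the coefficient `c = (b - a)/(1 + ⟨x₁, y₂⟩)`
of the Yang–Baxter map is its unique solution.
-/

open Matrix

/-- Standard dot product of two `N`-vectors. -/
def dotP {K : Type*} [Field K] {N : ℕ} (v w : Fin N → K) : K :=
  ∑ i, v i * w i

/-- The vector NLS Lax matrix: corner entry `λ + a + ⟨w₁,w₂⟩`, first row `⟨w₁|`,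
first column `|w₂⟩`, identity in the remaining `N × N` block. -/
def vlaxM {K : Type*} [Field K] {N : ℕ} (w1 w2 : Fin N → K) (a lam : K) :
    Matrix (Fin 1 ⊕ Fin N) (Fin 1 ⊕ Fin N) K :=
  Matrix.fromBlocks !![lam + a + dotP w1 w2]
    (Matrix.of fun _ j => w1 j) (Matrix.of fun i _ => w2 i) 1

section
variable {K : Type*} [Field K] {N : ℕ}

theorem dotP_eq_dotProduct (v w : Fin N → K) : dotP v w = v ⬝ᵥ w := rfl

theorem vlaxM_mul_vlaxM (p1 p2 q1 q2 : Fin N → K) (a b lam : K) :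
    vlaxM p1 p2 a lam * vlaxM q1 q2 b lam =
      fromBlocks !![(lam + a + p1 ⬝ᵥ p2) * (lam + b + q1 ⬝ᵥ q2) + p1 ⬝ᵥ q2]
        (of fun _ j => (lam + a + p1 ⬝ᵥ p2) * q1 j + p1 j)
        (of fun i _ => p2 i * (lam + b + q1 ⬝ᵥ q2) + q2 i)
        (vecMulVec p2 q1 + 1) := by
  simp only [vlaxM, fromBlocks_multiply, dotP_eq_dotProduct]
  congr 1 <;> ext i j <;> simp [mul_apply, dotProduct, vecMulVec_apply]

theorem vlaxM_refactorization {a b c : K} {x1 x2 y1 y2 : Fin N → K}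
    (hc : a + c * (1 + x1 ⬝ᵥ y2) = b) (lam : K) :
    vlaxM (y1 + c • x1) y2 a lam * vlaxM x1 (x2 - c • y2) b lam =
      vlaxM y1 y2 b lam * vlaxM x1 x2 a lam := by
  rw [vlaxM_mul_vlaxM, vlaxM_mul_vlaxM]
  simp only [add_dotProduct, dotProduct_sub, smul_dotProduct, dotProduct_smul, smul_eq_mul]
  congr 1
  · ext i j
    simp only [of_apply, cons_val', cons_val_fin_one]
    linear_combination (x1 ⬝ᵥ x2 - y1 ⬝ᵥ y2 - c * x1 ⬝ᵥ y2) * hc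
  · ext i j
    simp only [Pi.add_apply, Pi.smul_apply, smul_eq_mul, of_apply]
    linear_combination x1 j * hc
  · ext i j
    simp only [Pi.sub_apply, Pi.smul_apply, smul_eq_mul, of_apply]
    linear_combination -y2 i * hc

end

theorem vector_NLS_lax_representation_general {K : Type*} [Field K] {N : ℕ}
    (a b : K) (x1 x2 y1 y2 : Fin N → K)
    (h : 1 + dotP x1 y2 ≠ 0)
    (u1 u2 v1 v2 : Fin N → K)
    (hu1 : u1 = fun i => y1 i + (b - a) / (1 + dotP x1 y2) * x1 i)
    (hu2 : u2 = y2)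
    (hv1 : v1 = x1)
    (hv2 : v2 = fun i => x2 i + (a - b) / (1 + dotP x1 y2) * y2 i) :
    ∀ lam : K, vlaxM u1 u2 a lam * vlaxM v1 v2 b lam =
      vlaxM y1 y2 b lam * vlaxM x1 x2 a lam := by
  set c := (b - a) / (1 + dotP x1 y2)
  have hc : a + c * (1 + x1 ⬝ᵥ y2) = b := by
    rw [← dotP_eq_dotProduct, div_mul_cancel₀ _ h]
    ring
  have hu1 : u1 = y1 + c • x1 := hu1
  have hv2 : v2 = x2 - c • y2 := by
    ext i
    simp only [hv2, Pi.sub_apply, Pi.smul_apply, smul_eq_mul, c]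
    ring
  subst hu1 hu2 hv1 hv2
  exact vlaxM_refactorization hc

/-- The vector NLS Yang–Baxter map admits the Lax representation
`M(u₁,u₂;a,λ) M(v₁,v₂;b,λ) = M(y₁,y₂;b,λ) M(x₁,x₂;a,λ)`. -/
theorem vector_NLS_lax_representation {K : Type*} [Field K] [CharZero K] {N : ℕ}
    (a b : K) (x1 x2 y1 y2 : Fin N → K)
    (h : 1 + dotP x1 y2 ≠ 0)
    (u1 u2 v1 v2 : Fin N → K)
    (hu1 : u1 = fun i => y1 i + (b - a) / (1 + dotP x1 y2) * x1 i)
    (hu2 : u2 = y2)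
    (hv1 : v1 = x1)
    (hv2 : v2 = fun i => x2 i + (a - b) / (1 + dotP x1 y2) * y2 i) :
    ∀ lam : K, vlaxM u1 u2 a lam * vlaxM v1 v2 b lam =
      vlaxM y1 y2 b lam * vlaxM x1 x2 a lam :=
  vector_NLS_lax_representation_general a b x1 x2 y1 y2 h u1 u2 v1 v2 hu1 hu2 hv1 hv2
end
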